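/- Let G be the presented group on generators β, β′, γ, γ′, δ, δ′ with the relations R₃ together with the additional relations β = β′ = δ = δ′. Then the homomorphism G → B̄₃ sending β, β′, δ, δ′ to σ₁ and γ, γ′ to σ₂ is well defined and is an isomorphism. -/

import Mathlib

/-- The relations of the reduced braid group `B̄₃`:
`σ₁σ₂σ₁ = σ₂σ₁σ₂` and `(σ₁σ₂)³ = 1`. -/
def bbar3Rels : Set (FreeGroup (Fin 2)) :=
  { FreeGroup.of 0 * FreeGroup.of 1 * FreeGroup.of 0 *
      (FreeGroup.of 1 * FreeGroup.of 0 * FreeGroup.of 1)⁻¹,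
    (FreeGroup.of 0 * FreeGroup.of 1) ^ 3 }

/-- The reduced braid group `B̄₃ = ⟨σ₁, σ₂ ∣ σ₁σ₂σ₁ = σ₂σ₁σ₂, (σ₁σ₂)³ = 1⟩`. -/
abbrev Bbar3 : Type := PresentedGroup bbar3Rels

/-- The generator `σ₁` of `B̄₃`. -/
def σ1 : Bbar3 := PresentedGroup.of 0

/-- The generator `σ₂` of `B̄₃`. -/
def σ2 : Bbar3 := PresentedGroup.of 1

namespace Stmt

def b : FreeGroup (Fin 6) := FreeGroup.of 0
def b' : FreeGroup (Fin 6) := FreeGroup.of 1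
def c : FreeGroup (Fin 6) := FreeGroup.of 2
def c' : FreeGroup (Fin 6) := FreeGroup.of 3
def d : FreeGroup (Fin 6) := FreeGroup.of 4
def d' : FreeGroup (Fin 6) := FreeGroup.of 5

/-- The set of relators. -/
def rels : Set (FreeGroup (Fin 6)) :=
  { d' * b * b' * b * (d * b' * b * b')⁻¹,
    d' * b * (b * d)⁻¹,
    d * b' * (b' * d')⁻¹,
    (b * b' * d') * c' * (b * b' * d')⁻¹ * ((b' * b * d) * c * (b' * b * d)⁻¹)⁻¹,
    (c * d) ^ 3 * ((d * c) ^ 3)⁻¹,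
    (c' * d') ^ 3 * ((d' * c') ^ 3)⁻¹,
    b * ((d * c * d) * c * (d * c * d)⁻¹)⁻¹,
    b' * ((d' * c' * d') * c' * (d' * c' * d')⁻¹)⁻¹,
    (b * d * c) * d * (b * d * c)⁻¹ * ((b' * d' * c') * d' * (b' * d' * c')⁻¹)⁻¹,
    b' * d' * c' * b * d * c,
    b * b'⁻¹,
    b' * d⁻¹,
    d * d'⁻¹ }

end Stmt

private lemma relOne {α : Type*} {rels : Set (FreeGroup α)} {r : FreeGroup α} (h : r ∈ rels) :
    PresentedGroup.mk rels r = 1 :=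
  (QuotientGroup.eq_one_iff r).2 (Subgroup.subset_normalClosure h)

private lemma braidB : σ1 * σ2 * σ1 = σ2 * σ1 * σ2 := by
  have h := relOne (rels := bbar3Rels) (Set.mem_insert _ _)
  simp only [map_mul, map_inv, mul_inv_eq_one] at h
  exact h

private lemma ordB : (σ1 * σ2) ^ 3 = 1 := by
  have h := relOne (rels := bbar3Rels) (Set.mem_insert_iff.2 (Or.inr rfl))
  simp only [map_pow, map_mul] at h
  exact h

private lemma ordB' : (σ2 * σ1) ^ 3 = 1 := by
  have : (σ2 * σ1) ^ 3 = σ1⁻¹ * ((σ1 * σ2) ^ 3) * σ1 := by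
    simp [pow_succ, mul_assoc]
  rw [this, ordB]; group

private lemma sqB : σ1 * σ1 * σ2 * (σ1 * σ1 * σ2) = 1 := by
  have h1 : (σ1 * σ2 * σ1) * (σ1 * σ2 * σ1) = (σ1 * σ2) ^ 3 := by
    nth_rewrite 2 [braidB]; simp [pow_succ, mul_assoc]
  rw [ordB] at h1
  have : σ1 * σ1 * σ2 * (σ1 * σ1 * σ2) = σ1 * ((σ1 * σ2 * σ1) * (σ1 * σ2 * σ1)) * σ1⁻¹ := by group
  rw [this, h1]; group

private lemma conjB : (σ1 * σ2 * σ1) * σ2 * (σ1 * σ2 * σ1)⁻¹ = σ1 := by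
  have : (σ1 * σ2 * σ1) * σ2 = σ1 * (σ2 * σ1 * σ2) := by group
  rw [← braidB] at this
  rw [mul_inv_eq_iff_eq_mul, this]


namespace StmtG

abbrev G : Type := PresentedGroup Stmt.rels
def B : G := PresentedGroup.of 0
def B' : G := PresentedGroup.of 1
def C : G := PresentedGroup.of 2
def C' : G := PresentedGroup.of 3
def D : G := PresentedGroup.of 4
def D' : G := PresentedGroup.of 5

private lemma hB'D : B' = D := by
  have h := relOne (rels := Stmt.rels) (r := Stmt.b' * Stmt.d⁻¹) (by simp [Stmt.rels])
  simp only [map_mul, map_inv, mul_inv_eq_one] at h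
  exact h

private lemma hBD : B = D := by
  have h := relOne (rels := Stmt.rels) (r := Stmt.b * Stmt.b'⁻¹) (by simp [Stmt.rels])
  simp only [map_mul, map_inv, mul_inv_eq_one] at h
  exact h.trans hB'D

private lemma hD'D : D' = D := by
  have h := relOne (rels := Stmt.rels) (r := Stmt.d * Stmt.d'⁻¹) (by simp [Stmt.rels])
  simp only [map_mul, map_inv, mul_inv_eq_one] at h
  exact h.symm

private lemma hCC' : C' = C := by
  have h := relOne (rels := Stmt.rels)
    (r := (Stmt.b * Stmt.b' * Stmt.d') * Stmt.c' * (Stmt.b * Stmt.b' * Stmt.d')⁻¹ *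
      ((Stmt.b' * Stmt.b * Stmt.d) * Stmt.c * (Stmt.b' * Stmt.b * Stmt.d)⁻¹)⁻¹)
    (by simp [Stmt.rels])
  simp only [map_mul, map_inv, mul_inv_eq_one] at h
  change (B * B' * D') * C' * (B * B' * D')⁻¹ = (B' * B * D) * C * (B' * B * D)⁻¹ at h
  rw [hBD, hB'D, hD'D] at h
  exact mul_left_cancel (mul_right_cancel h)

private lemma braidG : D * C * D = C * D * C := by
  have h := relOne (rels := Stmt.rels)
    (r := Stmt.b * ((Stmt.d * Stmt.c * Stmt.d) * Stmt.c * (Stmt.d * Stmt.c * Stmt.d)⁻¹)⁻¹)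
    (by simp [Stmt.rels])
  simp only [map_mul, map_inv, mul_inv_eq_one] at h
  change B = (D * C * D) * C * (D * C * D)⁻¹ at h
  rw [hBD, eq_mul_inv_iff_mul_eq] at h
  have h2 : D * (D * C * D) = D * (C * D * C) := by
    have : D * (D * C * D) = D * (D * C * D) * C * C⁻¹ := by group
    rw [this, h]; group
  exact mul_left_cancel h2

private lemma sqG : D * D * C * (D * D * C) = 1 := by
  have h := relOne (rels := Stmt.rels)
    (r := Stmt.b' * Stmt.d' * Stmt.c' * Stmt.b * Stmt.d * Stmt.c) (by simp [Stmt.rels])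
  simp only [map_mul] at h
  change B' * D' * C' * B * D * C = 1 at h
  rw [hB'D, hD'D, hCC', hBD] at h
  have : D * D * C * (D * D * C) = D * D * C * D * D * C := by group
  rw [this, h]

private lemma sqG' : (D * C * D) * (D * C * D) = 1 := by
  have : (D * C * D) * (D * C * D) = D⁻¹ * (D * D * C * (D * D * C)) * D := by group
  rw [this, sqG]; group

private lemma ordG : (D * C) ^ 3 = 1 := by
  have h1 : (D * C) ^ 3 = (D * C * D) * (C * D * C) := by simp [pow_succ, mul_assoc]
  rw [h1, ← braidG, sqG']
end StmtG

private def fsig : Fin 6 → Bbar3 := ![σ1, σ1, σ2, σ2, σ1, σ1]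

private lemma fs0 : fsig 0 = σ1 := rfl
private lemma fs1 : fsig 1 = σ1 := rfl
private lemma fs2 : fsig 2 = σ2 := rfl
private lemma fs3 : fsig 3 = σ2 := rfl
private lemma fs4 : fsig 4 = σ1 := rfl
private lemma fs5 : fsig 5 = σ1 := rfl

private lemma conjB2 : σ1 = σ1 * σ2 * σ1 * σ2 * (σ1 * σ2 * σ1)⁻¹ := by
  rw [eq_mul_inv_iff_mul_eq]
  nth_rewrite 1 [braidB]
  group

private lemma sqB2 : σ1 * σ1 * σ2 * σ1 * σ1 * σ2 = 1 := by
  rw [show σ1 * σ1 * σ2 * σ1 * σ1 * σ2 = σ1 * σ1 * σ2 * (σ1 * σ1 * σ2) from by group, sqB]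

private lemma checkF : ∀ r ∈ Stmt.rels, FreeGroup.lift fsig r = 1 := by
  intro r hr
  simp only [Stmt.rels, Set.mem_insert_iff, Set.mem_singleton_iff] at hr
  rcases hr with rfl|rfl|rfl|rfl|rfl|rfl|rfl|rfl|rfl|rfl|rfl|rfl|rfl <;>
    simp only [Stmt.b, Stmt.b', Stmt.c, Stmt.c', Stmt.d, Stmt.d', map_mul, map_inv, map_pow,
      FreeGroup.lift_apply_of, fs0, fs1, fs2, fs3, fs4, fs5, mul_inv_eq_one] <;>
    first
      | rfl
      | exact conjB2
      | exact sqB2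
      | rw [ordB, ordB']

private def gsig : Fin 2 → StmtG.G := ![StmtG.D, StmtG.C]

private lemma gs0 : gsig 0 = StmtG.D := rfl
private lemma gs1 : gsig 1 = StmtG.C := rfl

private lemma checkG : ∀ r ∈ bbar3Rels, FreeGroup.lift gsig r = 1 := by
  intro r hr
  rcases hr with rfl | rfl
  · simp only [map_mul, map_inv, FreeGroup.lift_apply_of, gs0, gs1, mul_inv_eq_one]
    exact StmtG.braidG
  · simp only [map_mul, map_pow, FreeGroup.lift_apply_of, gs0, gs1]
    exact StmtG.ordG

/-- Adding the relations `β = β' = δ = δ'` to the relations R₃, the resulting group maps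
isomorphically onto `B̄₃` by `β, β', δ, δ' ↦ σ₁` and `γ, γ' ↦ σ₂`. -/
theorem stmt9 :
    ∃ φ : PresentedGroup Stmt.rels →* Bbar3,
      (φ (PresentedGroup.of 0) = σ1 ∧ φ (PresentedGroup.of 1) = σ1 ∧
       φ (PresentedGroup.of 2) = σ2 ∧ φ (PresentedGroup.of 3) = σ2 ∧
       φ (PresentedGroup.of 4) = σ1 ∧ φ (PresentedGroup.of 5) = σ1) ∧
      Function.Bijective φ := by
  refine ⟨PresentedGroup.toGroup checkF, ⟨?_, ?_, ?_, ?_, ?_, ?_⟩, ?_⟩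
  · exact PresentedGroup.toGroup.of checkF
  · exact PresentedGroup.toGroup.of checkF
  · exact PresentedGroup.toGroup.of checkF
  · exact PresentedGroup.toGroup.of checkF
  · exact PresentedGroup.toGroup.of checkF
  · exact PresentedGroup.toGroup.of checkF
  · set φ := PresentedGroup.toGroup checkF
    set ψ := PresentedGroup.toGroup checkG
    have h1 : ψ.comp φ = MonoidHom.id _ := by
      apply PresentedGroup.ext
      intro x
      fin_cases x <;>
        simp only [MonoidHom.comp_apply, MonoidHom.id_apply, φ, ψ,
          PresentedGroup.toGroup.of]
      · exact StmtG.hBD.symm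
      · exact StmtG.hB'D.symm
      · rfl
      · exact StmtG.hCC'.symm
      · rfl
      · exact StmtG.hD'D.symm
    have h2 : φ.comp ψ = MonoidHom.id _ := by
      apply PresentedGroup.ext
      intro x
      fin_cases x <;>
        simp only [MonoidHom.comp_apply, MonoidHom.id_apply, φ, ψ,
          PresentedGroup.toGroup.of] <;> rfl
    exact Function.bijective_iff_has_inverse.2
      ⟨ψ, fun x => DFunLike.congr_fun h1 x, fun x => DFunLike.congr_fun h2 x⟩
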